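/- There is an absolute constant C > 0 such that for every n ≥ 2 the following holds: let Y_1, ..., Y_{n−1} be independent random vectors each chosen uniformly at random from {−1,1}^n, let W be their linear span, and set l := ⌊(ln n)/10⌋. Then the probability that W is not l-typical is at most C/√(ln n). -/

import Mathlib

open Finset Real
open scoped RealInnerProductSpace

/-- The random sign vector determined by a Boolean vector: coordinates are `+1` or `-1`. -/
noncomputable def signVec (n : ℕ) (b : Fin n → Bool) : EuclideanSpace ℝ (Fin n) :=
  WithLp.toLp 2 (fun i => if b i then (1 : ℝ) else -1)

/-- A subspace `W ⊆ ℝ^n` is `l`-typical if every unit vector in `Wᗮ` has at least `l`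
coordinates of absolute value at least `1/(2n)`. -/
def IsTypical (n l : ℕ) (W : Submodule ℝ (EuclideanSpace ℝ (Fin n))) : Prop :=
  ∀ w ∈ Wᗮ, ‖w‖ = 1 → l ≤ Nat.card {i : Fin n // 1 / (2 * (n : ℝ)) ≤ |w i|}

noncomputable def sgn (b : Bool) : ℝ := if b then 1 else -1

lemma abs_sgn (b : Bool) : |sgn b| = 1 := by cases b <;> simp [sgn]
lemma sgn_mul_self (b : Bool) : sgn b * sgn b = 1 := by cases b <;> norm_num [sgn]

lemma typical_of_gram {n l : ℕ} (hn : 2 ≤ n) (hl : 1 ≤ l) (Y : Fin (n-1) → Fin n → Bool)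
    (hG : ∀ i j : Fin n, i ≠ j → |∑ k, sgn (Y k i) * sgn (Y k j)| ≤ ((n:ℝ) - 1) / (2*l)) :
    IsTypical n l (Submodule.span ℝ (Set.range fun k => signVec n (Y k))) := by
  classical
  intro w hw hnorm
  by_contra hcard
  push_neg at hcard
  have hn0 : (0:ℝ) < n := by positivity
  have hnR : (2:ℝ) ≤ n := by exact_mod_cast hn
  have hmR : ((n:ℝ) - 1) = ((n-1 : ℕ) : ℝ) := by
    have : (1:ℕ) ≤ n := by omega
    push_cast [Nat.cast_sub this]; ring
  set S : Finset (Fin n) := univ.filter (fun i => 1/(2*(n:ℝ)) ≤ |w i|) with hSdef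
  have hScard : (S.card : ℝ) ≤ (l:ℝ) - 1 := by
    have : Nat.card {i : Fin n // 1 / (2 * (n : ℝ)) ≤ |w i|} = S.card := by
      rw [Nat.card_eq_fintype_card, Fintype.card_subtype]
    rw [this] at hcard
    have : S.card + 1 ≤ l := hcard
    have := (Nat.cast_le (α := ℝ)).mpr this
    push_cast at this; linarith
  have hsmall : ∀ i ∉ S, |w i| ≤ 1/(2*(n:ℝ)) := by
    intro i hi
    simp only [hSdef, mem_filter, mem_univ, true_and, not_le] at hi
    exact le_of_lt hi
  -- orthogonality
  have horth : ∀ k, ∑ i, w i * sgn (Y k i) = 0 := by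
    intro k
    have h1 : signVec n (Y k) ∈ Submodule.span ℝ (Set.range fun k => signVec n (Y k)) :=
      Submodule.subset_span ⟨k, rfl⟩
    have h2 := (Submodule.mem_orthogonal _ w).mp hw _ h1
    have h3 : ⟪signVec n (Y k), w⟫ = ∑ i, w i * sgn (Y k i) := by
      simp [PiLp.inner_apply, RCLike.inner_apply, signVec, sgn, mul_comm]
    rw [h3] at h2; exact h2
  -- norm
  have hw2 : ∑ i, w i ^ 2 = 1 := by
    have h := EuclideanSpace.norm_eq w
    rw [hnorm] at h
    have h2 : ∑ i, ‖w i‖^2 = 1 := by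
      have := Real.sqrt_eq_one.mp h.symm
      simpa [sq_abs] using this
    simpa [sq_abs] using h2
  set Q : ℝ := ∑ i ∈ S, w i ^ 2 with hQdef
  have hQle : Q ≤ 1 := by
    rw [← hw2]
    exact Finset.sum_le_sum_of_subset_of_nonneg (subset_univ S) (by intros; positivity)
  have hcompl : ∑ i ∈ Sᶜ, w i ^ 2 ≤ 1/8 := by
    have h1 : ∀ i ∈ Sᶜ, w i ^ 2 ≤ (1/(2*(n:ℝ)))^2 := by
      intro i hi
      have := hsmall i (by simpa using hi)
      calc w i ^2 = |w i|^2 := (sq_abs _).symm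
        _ ≤ (1/(2*(n:ℝ)))^2 := by
            apply pow_le_pow_left₀ (abs_nonneg _) this
    calc ∑ i ∈ Sᶜ, w i ^ 2 ≤ ∑ _i ∈ Sᶜ, (1/(2*(n:ℝ)))^2 := Finset.sum_le_sum h1
      _ = Sᶜ.card * (1/(2*(n:ℝ)))^2 := by rw [Finset.sum_const, nsmul_eq_mul]
      _ ≤ n * (1/(2*(n:ℝ)))^2 := by
          apply mul_le_mul_of_nonneg_right _ (by positivity)
          exact_mod_cast Finset.card_le_card (subset_univ _) |>.trans (by simp)
      _ = 1/(4*(n:ℝ)) := by field_simp; ring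
      _ ≤ 1/8 := by
          apply one_div_le_one_div_of_le (by norm_num) (by linarith)
  have hQge : 7/8 ≤ Q := by
    have := Finset.sum_add_sum_compl S (fun i => w i ^2)
    rw [hw2] at this
    linarith
  -- r k
  set r : Fin (n-1) → ℝ := fun k => ∑ i ∈ S, w i * sgn (Y k i) with hrdef
  have hr : ∀ k, |r k| ≤ 1/2 := by
    intro k
    have hsplit := Finset.sum_add_sum_compl S (fun i => w i * sgn (Y k i))
    rw [horth k] at hsplit
    have : r k = -∑ i ∈ Sᶜ, w i * sgn (Y k i) := by rw [hrdef]; linarith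
    rw [this, abs_neg]
    calc |∑ i ∈ Sᶜ, w i * sgn (Y k i)| ≤ ∑ i ∈ Sᶜ, |w i * sgn (Y k i)| :=
          Finset.abs_sum_le_sum_abs _ _
      _ = ∑ i ∈ Sᶜ, |w i| := by
          apply Finset.sum_congr rfl; intro i _
          rw [abs_mul, abs_sgn, mul_one]
      _ ≤ ∑ _i ∈ Sᶜ, 1/(2*(n:ℝ)) := Finset.sum_le_sum (fun i hi => hsmall i (by simpa using hi))
      _ = Sᶜ.card * (1/(2*(n:ℝ))) := by rw [Finset.sum_const, nsmul_eq_mul]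
      _ ≤ n * (1/(2*(n:ℝ))) := by
          apply mul_le_mul_of_nonneg_right _ (by positivity)
          exact_mod_cast Finset.card_le_card (subset_univ _) |>.trans (by simp)
      _ = 1/2 := by field_simp
  have hsum_le : ∑ k, r k ^ 2 ≤ ((n:ℝ)-1) / 4 := by
    calc ∑ k, r k ^2 ≤ ∑ _k : Fin (n-1), (1/4 : ℝ) := by
          apply Finset.sum_le_sum
          intro k _
          have := hr k
          calc r k ^2 = |r k|^2 := (sq_abs _).symm
            _ ≤ (1/2)^2 := pow_le_pow_left₀ (abs_nonneg _) this 2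
            _ = 1/4 := by norm_num
      _ = ((n-1:ℕ):ℝ) * (1/4) := by simp [Finset.sum_const, nsmul_eq_mul]
      _ = ((n:ℝ)-1)/4 := by rw [← hmR]; ring
  -- expansion
  have hexp : ∑ k, r k ^ 2 = ∑ i ∈ S, ∑ j ∈ S, w i * w j * (∑ k, sgn (Y k i) * sgn (Y k j)) := by
    have h1 : ∀ k, r k ^2 = ∑ i ∈ S, ∑ j ∈ S, (w i * w j) * (sgn (Y k i) * sgn (Y k j)) := by
      intro k
      rw [hrdef, sq, Finset.sum_mul_sum]
      apply Finset.sum_congr rfl; intro i _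
      apply Finset.sum_congr rfl; intro j _
      ring
    simp only [h1]
    rw [Finset.sum_comm]
    apply Finset.sum_congr rfl; intro i _
    rw [Finset.sum_comm]
    apply Finset.sum_congr rfl; intro j _
    rw [Finset.mul_sum]
  -- diagonal
  have hdiag : ∀ i, (∑ k, sgn (Y k i) * sgn (Y k i)) = ((n:ℝ)-1) := by
    intro i
    simp only [sgn_mul_self]
    rw [Finset.sum_const, nsmul_eq_mul]
    simp [hmR]
  -- split
  have hsplit : ∑ i ∈ S, ∑ j ∈ S, w i * w j * (∑ k, sgn (Y k i) * sgn (Y k j))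
      = ((n:ℝ)-1) * Q + ∑ i ∈ S, ∑ j ∈ S.erase i, w i * w j * (∑ k, sgn (Y k i) * sgn (Y k j)) := by
    have h1 : ∀ i ∈ S, ∑ j ∈ S, w i * w j * (∑ k, sgn (Y k i) * sgn (Y k j))
        = w i ^2 * ((n:ℝ)-1) + ∑ j ∈ S.erase i, w i * w j * (∑ k, sgn (Y k i) * sgn (Y k j)) := by
      intro i hi
      rw [← Finset.sum_erase_add _ _ hi, hdiag i]
      ring_nf
    rw [Finset.sum_congr rfl h1, Finset.sum_add_distrib, ← Finset.sum_mul]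
    rw [hQdef]; ring_nf
  -- off-diagonal bound
  have hA2 : (∑ i ∈ S, |w i|)^2 ≤ ((l:ℝ) - 1) := by
    calc (∑ i ∈ S, |w i|)^2 ≤ S.card * ∑ i ∈ S, |w i|^2 := by
          exact sq_sum_le_card_mul_sum_sq
      _ = S.card * Q := by rw [hQdef]; congr 1; apply Finset.sum_congr rfl; intros; rw [sq_abs]
      _ ≤ ((l:ℝ)-1) * 1 := by
          apply mul_le_mul hScard hQle (by positivity) (by linarith)
      _ = (l:ℝ)-1 := by ring
  have hoff : |∑ i ∈ S, ∑ j ∈ S.erase i, w i * w j * (∑ k, sgn (Y k i) * sgn (Y k j))|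
      ≤ ((n:ℝ)-1)/2 := by
    have hlpos : (0:ℝ) < l := by exact_mod_cast hl
    have hm0 : (0:ℝ) ≤ (n:ℝ)-1 := by linarith
    have htnn : (0:ℝ) ≤ ((n:ℝ)-1)/(2*(l:ℝ)) := div_nonneg hm0 (by positivity)
    have hb : ∀ i ∈ S, ∀ j ∈ S.erase i,
        |w i * w j * (∑ k, sgn (Y k i) * sgn (Y k j))| ≤ |w i| * |w j| * (((n:ℝ)-1)/(2*l)) := by
      intro i hi j hj
      have hij : j ≠ i := Finset.ne_of_mem_erase hj
      rw [abs_mul, abs_mul]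
      apply mul_le_mul_of_nonneg_left (hG i j (Ne.symm hij)) (by positivity)
    calc |∑ i ∈ S, ∑ j ∈ S.erase i, w i * w j * (∑ k, sgn (Y k i) * sgn (Y k j))|
        ≤ ∑ i ∈ S, |∑ j ∈ S.erase i, w i * w j * (∑ k, sgn (Y k i) * sgn (Y k j))| :=
          Finset.abs_sum_le_sum_abs _ _
      _ ≤ ∑ i ∈ S, ∑ j ∈ S.erase i, |w i * w j * (∑ k, sgn (Y k i) * sgn (Y k j))| :=
          Finset.sum_le_sum (fun i _ => Finset.abs_sum_le_sum_abs _ _)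
      _ ≤ ∑ i ∈ S, ∑ j ∈ S.erase i, |w i| * |w j| * (((n:ℝ)-1)/(2*l)) :=
          Finset.sum_le_sum (fun i hi => Finset.sum_le_sum (hb i hi))
      _ ≤ ∑ i ∈ S, ∑ j ∈ S, |w i| * |w j| * (((n:ℝ)-1)/(2*l)) := by
          apply Finset.sum_le_sum
          intro i _
          apply Finset.sum_le_sum_of_subset_of_nonneg (Finset.erase_subset _ _)
          intros
          exact mul_nonneg (mul_nonneg (abs_nonneg _) (abs_nonneg _)) htnn
      _ = (∑ i ∈ S, |w i|)^2 * (((n:ℝ)-1)/(2*l)) := by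
          rw [sq, Finset.sum_mul_sum]
          simp [Finset.mul_sum, Finset.sum_mul, mul_assoc]
      _ ≤ ((l:ℝ)-1) * (((n:ℝ)-1)/(2*l)) := by
          apply mul_le_mul_of_nonneg_right hA2 htnn
      _ ≤ (l:ℝ) * (((n:ℝ)-1)/(2*l)) := by
          apply mul_le_mul_of_nonneg_right (by linarith) htnn
      _ = ((n:ℝ)-1)/2 := by field_simp
  -- combine
  have hlower : 3*((n:ℝ)-1)/8 ≤ ∑ k, r k ^2 := by
    rw [hexp, hsplit]
    have := abs_le.mp hoff
    nlinarith [hQge, hnR]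
  linarith [hsum_le, hlower, hnR]

lemma sum_sgn : ∑ b : Bool, sgn b = 0 := by simp [sgn]

-- cosh bound
lemma cosh_bound (x : ℝ) (hx : 0 ≤ x) : exp x + exp (-x) ≤ 2 * exp (2*x^2) := by
  rcases le_or_gt 1 x with h1 | h1
  · have h2 : exp (-x) ≤ exp x := by apply exp_le_exp.mpr; linarith
    have h3 : exp x ≤ exp (2*x^2) := by
      apply exp_le_exp.mpr; nlinarith
    linarith
  · have key : exp x - 1 ≤ x * exp x := by
      have h2 : 1 - x ≤ exp (-x) := by
        have := Real.add_one_le_exp (-x); linarith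
      have h3 : exp x * (1 - exp (-x)) ≤ exp x * x := by
        apply mul_le_mul_of_nonneg_left _ (le_of_lt (exp_pos x))
        nlinarith [exp_pos (-x)]
      rw [mul_sub, ← Real.exp_add] at h3
      simp at h3
      linarith
    have hid : exp x + exp (-x) - 2 = exp (-x) * (exp x - 1)^2 := by
      have : exp (-x) * exp x = 1 := by rw [← Real.exp_add]; simp
      nlinarith [this]
    have hsq : (exp x - 1)^2 ≤ x^2 * (exp x)^2 := by
      have h0 : 0 ≤ exp x - 1 := by nlinarith [Real.add_one_le_exp x]
      nlinarith [key, mul_nonneg hx (le_of_lt (exp_pos x))]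
    have hxe : exp (-x) * (exp x - 1)^2 ≤ x^2 * exp x := by
      calc exp (-x) * (exp x - 1)^2 ≤ exp (-x) * (x^2 * (exp x)^2) := by
            apply mul_le_mul_of_nonneg_left hsq (le_of_lt (exp_pos _))
        _ = x^2 * (exp (-x) * exp x) * exp x := by ring
        _ = x^2 * exp x := by rw [← Real.exp_add]; simp
    have hex : exp x ≤ 3 := by
      calc exp x ≤ exp 1 := exp_le_exp.mpr (le_of_lt h1)
        _ ≤ 3 := by have := Real.exp_one_lt_d9; linarith
    have h4 : exp x + exp (-x) ≤ 2 + 3 * x^2 := by nlinarith [hid, hxe, sq_nonneg x]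
    have h5 : 1 + 2*x^2 ≤ exp (2*x^2) := by
      have := Real.add_one_le_exp (2*x^2); linarith
    nlinarith [sq_nonneg x]

-- the sum over Bool vectors of a product of signs at two distinct coords is 0
lemma sum_sgn_mul_sgn (n : ℕ) (i j : Fin n) (hij : i ≠ j) :
    ∑ y : Fin n → Bool, sgn (y i) * sgn (y j) = 0 := by
  classical
  have key : ∀ y : Fin n → Bool, sgn (y i) * sgn (y j)
      = ∏ a, (if a = i then sgn (y a) else if a = j then sgn (y a) else 1) := by
    intro y
    rw [Fintype.prod_eq_mul i j hij ?_]
    · simp [hij]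
    · intro k hk
      simp [hk.1, hk.2]
  simp only [key]
  rw [← Fintype.prod_sum (fun a (b : Bool) => if a = i then sgn b else if a = j then sgn b else 1)]
  apply Finset.prod_eq_zero (Finset.mem_univ i)
  norm_num [sgn]

-- MGF over the whole Y-space
lemma mgf_eq (m n : ℕ) (i j : Fin n) (hij : i ≠ j) (lam : ℝ) :
    ∑ Y : Fin m → Fin n → Bool, exp (lam * ∑ k, sgn (Y k i) * sgn (Y k j))
      = ((exp lam + exp (-lam)) / 2)^m * (2^n : ℝ)^m := by
  classical
  set c : ℝ := (exp lam + exp (-lam)) / 2 with hc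
  set d : ℝ := (exp lam - exp (-lam)) / 2 with hd
  have hpt : ∀ a b : Bool, exp (lam * (sgn a * sgn b)) = c + (sgn a * sgn b) * d := by
    intro a b
    cases a <;> cases b <;> simp [sgn, hc, hd] <;> ring
  have hstep : ∀ Y : Fin m → Fin n → Bool,
      exp (lam * ∑ k, sgn (Y k i) * sgn (Y k j))
        = ∏ k, (c + (sgn (Y k i) * sgn (Y k j)) * d) := by
    intro Y
    rw [Finset.mul_sum, Real.exp_sum]
    exact Finset.prod_congr rfl (fun k _ => hpt _ _)
  simp only [hstep]
  rw [← Fintype.prod_sum (fun (_ : Fin m) (y : Fin n → Bool) => c + (sgn (y i) * sgn (y j)) * d)]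
  have hinner : ∑ y : Fin n → Bool, (c + (sgn (y i) * sgn (y j)) * d) = c * 2^n := by
    rw [Finset.sum_add_distrib, ← Finset.sum_mul, sum_sgn_mul_sgn n i j hij]
    simp [Fintype.card_fun, mul_comm]
  rw [Finset.prod_const, hinner, Finset.card_univ, Fintype.card_fin, mul_pow]

-- Markov / Chernoff counting
lemma count_le_mgf {Ω : Type*} [Fintype Ω] (f : Ω → ℝ) (t lam : ℝ) (hlam : 0 ≤ lam)
    [DecidablePred fun x => t ≤ f x] :
    ((univ.filter (fun x => t ≤ f x)).card : ℝ)
      ≤ exp (-(lam*t)) * ∑ x : Ω, exp (lam * f x) := by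
  have h1 : ((univ.filter (fun x => t ≤ f x)).card : ℝ) * exp (lam * t)
      ≤ ∑ x : Ω, exp (lam * f x) := by
    calc ((univ.filter (fun x => t ≤ f x)).card : ℝ) * exp (lam * t)
        = ∑ _x ∈ univ.filter (fun x => t ≤ f x), exp (lam * t) := by
          rw [Finset.sum_const, nsmul_eq_mul]
      _ ≤ ∑ x ∈ univ.filter (fun x => t ≤ f x), exp (lam * f x) := by
          apply Finset.sum_le_sum
          intro x hx
          have := (Finset.mem_filter.mp hx).2
          exact exp_le_exp.mpr (mul_le_mul_of_nonneg_left this hlam)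
      _ ≤ ∑ x : Ω, exp (lam * f x) :=
          Finset.sum_le_sum_of_subset_of_nonneg (Finset.filter_subset _ _)
            (fun _ _ _ => le_of_lt (exp_pos _))
  have h2 : (0:ℝ) < exp (lam * t) := exp_pos _
  rw [Real.exp_neg, inv_mul_eq_div, le_div_iff₀ h2]
  exact h1

lemma pair_tail (m n : ℕ) (hm : 1 ≤ m) (i j : Fin n) (hij : i ≠ j) (t : ℝ) (ht : 0 ≤ t) :
    ((univ.filter (fun Y : Fin m → Fin n → Bool =>
        t ≤ |∑ k, sgn (Y k i) * sgn (Y k j)|)).card : ℝ)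
      ≤ 2 * 2^(m*n) * exp (-(t^2)/(8*m)) := by
  classical
  set T : (Fin m → Fin n → Bool) → ℝ := fun Y => ∑ k, sgn (Y k i) * sgn (Y k j) with hT
  set lam : ℝ := t / (4*m) with hlam
  have hm0 : (0:ℝ) < m := by exact_mod_cast Nat.lt_of_lt_of_le Nat.zero_lt_one hm
  have hlam0 : 0 ≤ lam := by positivity
  set M : ℝ := ((exp lam + exp (-lam)) / 2)^m * (2^n : ℝ)^m with hM
  have hMbound : exp (-(lam*t)) * M ≤ 2^(m*n) * exp (-(t^2)/(8*m)) := by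
    have h1 : (exp lam + exp (-lam)) / 2 ≤ exp (2*lam^2) := by
      have := cosh_bound lam hlam0; linarith
    have h2 : ((exp lam + exp (-lam)) / 2)^m ≤ exp (2*lam^2)^m := by
      apply pow_le_pow_left₀ (by positivity) h1
    have h3 : exp (2*lam^2)^m = exp (m * (2*lam^2)) := by
      rw [← Real.exp_nat_mul]
    have h4 : exp (-(lam*t)) * exp (m*(2*lam^2)) = exp (-(t^2)/(8*m)) := by
      rw [← Real.exp_add]
      congr 1
      rw [hlam]
      field_simp
      ring
    have h5 : ((2:ℝ)^n)^m = 2^(m*n) := by rw [← pow_mul, Nat.mul_comm]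
    calc exp (-(lam*t)) * M
        ≤ exp (-(lam*t)) * (exp (↑m*(2*lam^2)) * (2^n:ℝ)^m) := by
          rw [hM]
          apply mul_le_mul_of_nonneg_left _ (le_of_lt (exp_pos _))
          apply mul_le_mul_of_nonneg_right (h3 ▸ h2) (by positivity)
      _ = (2^n:ℝ)^m * (exp (-(lam*t)) * exp (↑m*(2*lam^2))) := by ring
      _ = 2^(m*n) * exp (-(t^2)/(8*m)) := by rw [h4, h5]
  have hA : ((univ.filter (fun Y : Fin m → Fin n → Bool => t ≤ T Y)).card : ℝ)
      ≤ exp (-(lam*t)) * M := by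
    have := count_le_mgf T t lam hlam0
    rw [hM, ← mgf_eq m n i j hij lam]
    simpa [hT] using this
  have hB : ((univ.filter (fun Y : Fin m → Fin n → Bool => t ≤ -(T Y))).card : ℝ)
      ≤ exp (-(lam*t)) * M := by
    have h := count_le_mgf (fun Y => -(T Y)) t lam hlam0
    have heq : (∑ Y : Fin m → Fin n → Bool, exp (lam * -(T Y)))
        = ((exp (-lam) + exp (-(-lam))) / 2)^m * (2^n : ℝ)^m := by
      rw [← mgf_eq m n i j hij (-lam)]
      apply Finset.sum_congr rfl
      intro Y _
      congr 1
      simp [hT]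
    rw [heq, neg_neg, add_comm (exp (-lam)), ← hM] at h
    exact h
  have hsub : (univ.filter (fun Y : Fin m → Fin n → Bool => t ≤ |T Y|))
      ⊆ (univ.filter (fun Y : Fin m → Fin n → Bool => t ≤ T Y))
        ∪ (univ.filter (fun Y : Fin m → Fin n → Bool => t ≤ -(T Y))) := by
    intro Y hY
    have := (Finset.mem_filter.mp hY).2
    rcases le_abs.mp this with h | h
    · exact Finset.mem_union_left _ (Finset.mem_filter.mpr ⟨Finset.mem_univ _, h⟩)
    · exact Finset.mem_union_right _ (Finset.mem_filter.mpr ⟨Finset.mem_univ _, by simpa using h⟩)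
  have hcards : ((univ.filter (fun Y : Fin m → Fin n → Bool => t ≤ |T Y|)).card : ℝ)
      ≤ ((univ.filter (fun Y : Fin m → Fin n → Bool => t ≤ T Y)).card : ℝ)
        + ((univ.filter (fun Y : Fin m → Fin n → Bool => t ≤ -(T Y))).card : ℝ) := by
    have h1 := Finset.card_le_card hsub
    have h2 := Finset.card_union_le
      (univ.filter (fun Y : Fin m → Fin n → Bool => t ≤ T Y))
      (univ.filter (fun Y : Fin m → Fin n → Bool => t ≤ -(T Y)))
    exact_mod_cast le_trans h1 h2
  calc ((univ.filter (fun Y : Fin m → Fin n → Bool => t ≤ |T Y|)).card : ℝ)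
      ≤ exp (-(lam*t)) * M + exp (-(lam*t)) * M := by
        refine le_trans hcards (add_le_add hA hB)
    _ = 2 * (exp (-(lam*t)) * M) := by ring
    _ ≤ 2 * (2^(m*n) * exp (-(t^2)/(8*m))) := by linarith [hMbound]
    _ = 2 * 2^(m*n) * exp (-(t^2)/(8*m)) := by ring

/-- The span of `n - 1` independent uniform `±1` vectors fails to be `⌊(ln n)/10⌋`-typical
with probability `O(1/√(ln n))`. -/
theorem prob_random_span_not_typical :
    ∃ C > (0 : ℝ), ∀ n : ℕ, 2 ≤ n →
      (Nat.card {Y : Fin (n - 1) → Fin n → Bool //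
          ¬ IsTypical n ⌊Real.log n / 10⌋₊
            (Submodule.span ℝ (Set.range fun i => signVec n (Y i)))} : ℝ) /
          2 ^ ((n - 1) * n) ≤ C / Real.sqrt (Real.log n) := by
  classical
  refine ⟨2, by norm_num, ?_⟩
  intro n hn
  set l := ⌊Real.log n / 10⌋₊ with hldef
  have hn0 : (0:ℝ) < n := by positivity
  have hn1 : (1:ℝ) < n := by exact_mod_cast hn
  have hlog0 : 0 < Real.log n := Real.log_pos hn1
  have hsqrt0 : 0 < Real.sqrt (Real.log n) := Real.sqrt_pos.mpr hlog0
  have hpow0 : (0:ℝ) < 2 ^ ((n-1) * n) := by positivity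
  by_cases hl0 : l = 0
  · have hemp : IsEmpty {Y : Fin (n - 1) → Fin n → Bool //
        ¬ IsTypical n l (Submodule.span ℝ (Set.range fun i => signVec n (Y i)))} := by
      constructor
      rintro ⟨Y, hY⟩
      apply hY
      intro w hw hnorm
      rw [hl0]
      exact Nat.zero_le _
    rw [Nat.card_of_isEmpty]
    simp only [Nat.cast_zero, zero_div]
    positivity
  -- main case
  have hl1 : 1 ≤ l := Nat.one_le_iff_ne_zero.mpr hl0
  have hlR : (1:ℝ) ≤ l := by exact_mod_cast hl1
  set L : ℝ := Real.log n with hLdef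
  have hL10 : 10 ≤ L := by
    by_contra h
    push_neg at h
    have h2 : L / 10 < 1 := by linarith
    exact hl0 (Nat.floor_eq_zero.mpr h2)
  have hlL : (l:ℝ) ≤ L / 10 := Nat.floor_le (by positivity)
  have hnL : (n:ℝ) = Real.exp L := (Real.exp_log hn0).symm
  -- n - 1 ≥ L^3
  have hL3 : L^3 + 1 ≤ (n:ℝ) := by
    have hterm : L^6 / 720 ≤ Real.exp L := by
      have hs := Real.sum_le_exp_of_nonneg (by linarith : (0:ℝ) ≤ L) 7
      have h6 : L^6 / (Nat.factorial 6 : ℝ) ≤ ∑ i ∈ Finset.range 7, L^i / (Nat.factorial i) := by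
        apply Finset.single_le_sum (f := fun i => L^i / (Nat.factorial i : ℝ))
        · intro i _
          positivity
        · simp
      rw [show (Nat.factorial 6 : ℝ) = 720 by norm_num [Nat.factorial]] at h6
      exact le_trans h6 hs
    rw [hnL]
    nlinarith [hterm, sq_nonneg L, sq_nonneg (L-10), sq_nonneg (L^3 - 1000)]
  have hmR : ((n-1 : ℕ) : ℝ) = (n:ℝ) - 1 := by
    have h1 : (1:ℕ) ≤ n := by omega
    push_cast [Nat.cast_sub h1]
    ring
  have hkey : 3 * L ≤ ((n:ℝ) - 1) / (32 * (l:ℝ)^2) := by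
    rw [le_div_iff₀ (by positivity)]
    have hl2 : (l:ℝ)^2 ≤ L^2/100 := by nlinarith
    nlinarith [hL3, hlog0]
  -- counting
  set t : ℝ := ((n:ℝ) - 1) / (2 * l) with htdef
  have ht0 : 0 ≤ t := by
    apply div_nonneg _ (by positivity)
    linarith
  set bad : Finset (Fin (n-1) → Fin n → Bool) :=
    univ.filter (fun Y => ¬ IsTypical n l
      (Submodule.span ℝ (Set.range fun i => signVec n (Y i)))) with hbaddef
  have hNat : Nat.card {Y : Fin (n - 1) → Fin n → Bool //
      ¬ IsTypical n l (Submodule.span ℝ (Set.range fun i => signVec n (Y i)))} = bad.card := by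
    rw [Nat.card_eq_fintype_card, Fintype.card_subtype]
  have hsub : bad ⊆ (univ.offDiag).biUnion (fun p : Fin n × Fin n =>
      univ.filter (fun Y : Fin (n-1) → Fin n → Bool =>
        t ≤ |∑ k, sgn (Y k p.1) * sgn (Y k p.2)|)) := by
    intro Y hY
    have hbadY := (Finset.mem_filter.mp hY).2
    have : ¬ (∀ i j : Fin n, i ≠ j → |∑ k, sgn (Y k i) * sgn (Y k j)| ≤ ((n:ℝ) - 1) / (2*l)) := by
      intro hG
      exact hbadY (typical_of_gram hn hl1 Y hG)
    push_neg at this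
    obtain ⟨i, j, hij, hgt⟩ := this
    apply Finset.mem_biUnion.mpr
    refine ⟨(i, j), Finset.mem_offDiag.mpr ⟨Finset.mem_univ _, Finset.mem_univ _, hij⟩, ?_⟩
    exact Finset.mem_filter.mpr ⟨Finset.mem_univ _, le_of_lt hgt⟩
  have hcount : (bad.card : ℝ) ≤ (n:ℝ)^2 * (2 * 2^((n-1)*n) * Real.exp (-(t^2)/(8*((n-1:ℕ):ℝ)))) := by
    have h1 : bad.card ≤ ∑ p ∈ univ.offDiag, ((univ.filter (fun Y : Fin (n-1) → Fin n → Bool =>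
        t ≤ |∑ k, sgn (Y k p.1) * sgn (Y k p.2)|)).card) :=
      le_trans (Finset.card_le_card hsub) (Finset.card_biUnion_le)
    have h2 : ((bad.card : ℝ)) ≤ ∑ p ∈ univ.offDiag (α := Fin n),
        ((univ.filter (fun Y : Fin (n-1) → Fin n → Bool =>
        t ≤ |∑ k, sgn (Y k p.1) * sgn (Y k p.2)|)).card : ℝ) := by
      exact_mod_cast h1
    have h3 : ∀ p ∈ univ.offDiag (α := Fin n),
        ((univ.filter (fun Y : Fin (n-1) → Fin n → Bool =>
        t ≤ |∑ k, sgn (Y k p.1) * sgn (Y k p.2)|)).card : ℝ)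
        ≤ 2 * 2^((n-1)*n) * Real.exp (-(t^2)/(8*((n-1:ℕ):ℝ))) := by
      intro p hp
      have hij := (Finset.mem_offDiag.mp hp).2.2
      have hm1 : 1 ≤ n - 1 := Nat.le_pred_of_lt hn
      exact pair_tail (n-1) n hm1 p.1 p.2 hij t ht0
    calc (bad.card : ℝ) ≤ ∑ _p ∈ univ.offDiag (α := Fin n),
          (2 * 2^((n-1)*n) * Real.exp (-(t^2)/(8*((n-1:ℕ):ℝ)))) :=
        le_trans h2 (Finset.sum_le_sum h3)
      _ = ((univ.offDiag (α := Fin n)).card : ℝ) * (2 * 2^((n-1)*n) * Real.exp (-(t^2)/(8*((n-1:ℕ):ℝ)))) := by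
          rw [Finset.sum_const, nsmul_eq_mul]
      _ ≤ (n:ℝ)^2 * (2 * 2^((n-1)*n) * Real.exp (-(t^2)/(8*((n-1:ℕ):ℝ)))) := by
          apply mul_le_mul_of_nonneg_right _ (by positivity)
          have : (univ.offDiag (α := Fin n)).card ≤ n^2 := by
            rw [Finset.offDiag_card]
            simp only [Finset.card_univ, Fintype.card_fin]
            nlinarith [Nat.sub_le (n*n) n]
          exact_mod_cast this
  -- exponent simplification
  have hexp_eq : -(t^2)/(8*((n-1:ℕ):ℝ)) = -(((n:ℝ)-1) / (32 * (l:ℝ)^2)) := by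
    rw [hmR, htdef]
    have hne : (n:ℝ) - 1 ≠ 0 := by linarith
    field_simp
    ring
  have hexp_le : Real.exp (-(t^2)/(8*((n-1:ℕ):ℝ))) ≤ ((n:ℝ)^3)⁻¹ := by
    rw [hexp_eq]
    have h1 : Real.exp (-(((n:ℝ)-1) / (32 * (l:ℝ)^2))) ≤ Real.exp (-(3*L)) := by
      apply Real.exp_le_exp.mpr
      linarith [hkey]
    have h2 : Real.exp (-(3*L)) = ((n:ℝ)^3)⁻¹ := by
      rw [Real.exp_neg]
      congr 1
      rw [show (3:ℝ)*L = ((3:ℕ):ℝ)*L by norm_num, Real.exp_nat_mul L 3, ← hnL]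
    rw [← h2]; exact h1
  -- final assembly
  have hsqrtn : Real.sqrt L ≤ (n:ℝ) := by
    have hLn : L ≤ (n:ℝ)^2 := by
      have := Real.log_le_sub_one_of_pos hn0
      nlinarith
    calc Real.sqrt L ≤ Real.sqrt ((n:ℝ)^2) := Real.sqrt_le_sqrt hLn
      _ = (n:ℝ) := Real.sqrt_sq (le_of_lt hn0)
  rw [hNat, div_le_div_iff₀ hpow0 hsqrt0]
  calc (bad.card : ℝ) * Real.sqrt L
      ≤ ((n:ℝ)^2 * (2 * 2^((n-1)*n) * ((n:ℝ)^3)⁻¹)) * Real.sqrt L := by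
        apply mul_le_mul_of_nonneg_right _ (Real.sqrt_nonneg _)
        refine le_trans hcount ?_
        apply mul_le_mul_of_nonneg_left _ (by positivity)
        apply mul_le_mul_of_nonneg_left hexp_le (by positivity)
    _ = (2 / (n:ℝ)) * Real.sqrt L * 2^((n-1)*n) := by
        field_simp
    _ ≤ (2 / (n:ℝ)) * (n:ℝ) * 2^((n-1)*n) := by
        apply mul_le_mul_of_nonneg_right _ (by positivity)
        apply mul_le_mul_of_nonneg_left hsqrtn (by positivity)
    _ = 2 * 2^((n-1)*n) := by field_simp
    _ = 2 * 2^((n-1)*n) := rfl
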